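/- Let D ⊆ ℂ be an open convex set with nonempty boundary and let u, v ∈ D with u ≠ v. Then s_D(u, v) = sup over all open half-planes H = {z ∈ ℂ : Re(conj(n)(z − p)) < 0}, where n ∈ ℂ with |n| = 1 and p ∈ ∂D satisfy D ⊆ H, of the quantities s_H(u, v) = |u − v| / inf_{w ∈ ∂H}(|u − w| + |w − v|). -/

import Mathlib

/-!
By convexity (Hahn–Banach), every boundary point `w` of `D` is also a boundary point of a
supporting half-plane `H` of `D` at `w`, so `s_H(u, v) ≥ |u - v| / (|u - w| + |w - v|)`; taking
the supremum over `w` gives `s_D ≤ sup s_H`. Conversely, a boundary point `z` of a half-plane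
`H ⊇ D` lies outside `D`, so the segment `[u, z]` crosses `∂D` at some `w`, and
`|u - w| + |w - v| ≤ |u - z| + |z - v|` by the triangle inequality; hence `s_H ≤ s_D`.
-/

open Complex

/-- The triangular ratio metric of a proper nonempty subset `D ⊆ ℂ`:
`s_D(u, v) = |u - v| / inf_{w ∈ ∂D} (|u - w| + |w - v|)`
(for `u = v` the numerator vanishes, so the value is `0`). -/
noncomputable def sD (D : Set ℂ) (u v : ℂ) : ℝ :=
  ‖u - v‖ /
    sInf ((fun w => ‖u - w‖ + ‖w - v‖) '' frontier D)

open Set Filter Topology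
open scoped RealInnerProductSpace

theorem IsPreconnected.inter_frontier_nonempty {X : Type*} [TopologicalSpace X] {s t : Set X}
    (hs : IsPreconnected s) (hst : (s ∩ t).Nonempty) (hst' : (s \ t).Nonempty) :
    (s ∩ frontier t).Nonempty := by
  by_contra h
  have hint : s ∩ closure t ⊆ interior t := fun x hx => by
    by_contra hx'
    exact h ⟨x, hx.1, hx.2, hx'⟩
  obtain ⟨a, has, hat⟩ := hst
  obtain ⟨b, hbs, hbt⟩ := hst'
  have hsub : s ⊆ interior t :=
    hs.subset_of_closure_inter_subset isOpen_interior ⟨a, has, hint ⟨has, subset_closure hat⟩⟩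
      fun x hx => hint ⟨hx.2, closure_mono interior_subset hx.1⟩
  exact hbt (interior_subset (hsub hbs))

theorem bddBelow_image_norm_sub_add_norm_sub {G : Type*} [SeminormedAddGroup G] (s : Set G)
    (u v : G) : BddBelow ((fun w => ‖u - w‖ + ‖w - v‖) '' s) :=
  ⟨0, by rintro _ ⟨w, -, rfl⟩; positivity⟩

theorem exists_mem_frontier_norm_sub_add_norm_sub_le {E : Type*} [NormedAddCommGroup E]
    [NormedSpace ℝ E] {D : Set E} {u z : E} (hu : u ∈ D)
    (hz : z ∉ D) (v : E) : ∃ w ∈ frontier D, ‖u - w‖ + ‖w - v‖ ≤ ‖u - z‖ + ‖z - v‖ := by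
  obtain ⟨w, hw_seg, hw⟩ := (convex_segment u z).isPreconnected.inter_frontier_nonempty
    ⟨u, left_mem_segment ℝ u z, hu⟩ ⟨z, right_mem_segment ℝ u z, hz⟩
  refine ⟨w, hw, ?_⟩
  have hsplit : ‖u - w‖ + ‖w - z‖ = ‖u - z‖ := by
    simpa only [dist_eq_norm] using dist_add_dist_of_mem_segment hw_seg
  linarith [norm_sub_le_norm_sub_add_norm_sub w z v]

section InnerProductSpace

variable {F : Type*} [NormedAddCommGroup F] [InnerProductSpace ℝ F]

theorem isOpen_setOf_inner_sub_neg (n p : F) : IsOpen {z | ⟪n, z - p⟫ < 0} :=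
  isOpen_lt (by fun_prop) continuous_const

theorem mem_frontier_setOf_inner_sub_neg {n : F} (hn : n ≠ 0) (p : F) :
    p ∈ frontier {z | ⟪n, z - p⟫ < 0} := by
  rw [(isOpen_setOf_inner_sub_neg n p).frontier_eq]
  refine ⟨mem_closure_of_tendsto (f := fun t : ℝ => p - t • n) (b := 𝓝[>] 0) ?_ ?_, by simp⟩
  · exact ((continuous_const.sub (continuous_id.smul continuous_const)).tendsto' 0 p
      (by simp)).mono_left nhdsWithin_le_nhds
  · filter_upwards [self_mem_nhdsWithin] with t (ht : 0 < t)
    have : 0 < ‖n‖ ^ 2 := by positivity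
    simp only [sub_sub_cancel_left, inner_neg_right, inner_smul_right,
      real_inner_self_eq_norm_sq]
    nlinarith

theorem exists_norm_eq_one_inner_sub_neg [CompleteSpace F] {D : Set F} (hD : IsOpen D)
    (hconv : Convex ℝ D) (hne : D.Nonempty) {w : F} (hw : w ∉ D) :
    ∃ n : F, ‖n‖ = 1 ∧ ∀ z ∈ D, ⟪n, z - w⟫ < 0 := by
  obtain ⟨f, hf⟩ := geometric_hahn_banach_open_point hconv hD hw
  set m := (InnerProductSpace.toDual ℝ F).symm f
  have hm : ∀ z, ⟪m, z⟫ = f z := fun z => InnerProductSpace.toDual_symm_apply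
  have hm0 : m ≠ 0 := by
    obtain ⟨u, hu⟩ := hne
    rintro h
    have := hf u hu
    rw [← hm, ← hm, h, inner_zero_left, inner_zero_left] at this
    exact this.false
  refine ⟨(‖m‖⁻¹ : ℝ) • m, norm_smul_inv_norm hm0, fun z hz => ?_⟩
  rw [inner_smul_left, inner_sub_right, hm, hm]
  have := hf z hz
  exact mul_neg_of_pos_of_neg (by simpa using hm0) (by linarith)

end InnerProductSpace

theorem Complex.re_conj_mul_eq_inner (n z : ℂ) : (starRingEnd ℂ n * z).re = ⟪n, z⟫ := by
  rw [Complex.inner, mul_comm]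

section TriangularRatio

variable {D E : Set ℂ} {u v : ℂ}

theorem sD_nonneg : 0 ≤ sD D u v :=
  div_nonneg (norm_nonneg _) (Real.sInf_nonneg (by rintro _ ⟨w, -, rfl⟩; positivity))

theorem sInf_image_frontier_pos (hD : (frontier D).Nonempty) (huv : u ≠ v) :
    0 < sInf ((fun w => ‖u - w‖ + ‖w - v‖) '' frontier D) :=
  (norm_pos_iff.mpr (sub_ne_zero.mpr huv)).trans_le <|
    le_csInf (hD.image _) (by rintro _ ⟨w, -, rfl⟩; exact norm_sub_le_norm_sub_add_norm_sub u w v)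

theorem norm_sub_div_le_sD {w : ℂ} (hw : w ∈ frontier D) (huv : u ≠ v) :
    ‖u - v‖ / (‖u - w‖ + ‖w - v‖) ≤ sD D u v :=
  div_le_div_of_nonneg_left (norm_nonneg _) (sInf_image_frontier_pos ⟨w, hw⟩ huv)
    (csInf_le (bddBelow_image_norm_sub_add_norm_sub _ u v) ⟨w, hw, rfl⟩)

theorem sD_le_sD_of_subset (hE : IsOpen E) (hDE : D ⊆ E) (hu : u ∈ D) (huv : u ≠ v)
    (hE_fr : (frontier E).Nonempty) : sD E u v ≤ sD D u v := by
  have hcross : ∀ z ∈ frontier E, ∃ w ∈ frontier D, ‖u - w‖ + ‖w - v‖ ≤ ‖u - z‖ + ‖z - v‖ :=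
    fun z hz => exists_mem_frontier_norm_sub_add_norm_sub_le hu
      (fun hzD => (disjoint_frontier_iff_isOpen.mpr hE).notMem_of_mem_left hz (hDE hzD)) v
  obtain ⟨z₀, hz₀⟩ := hE_fr
  obtain ⟨w₀, hw₀, -⟩ := hcross z₀ hz₀
  refine div_le_div_of_nonneg_left (norm_nonneg _) (sInf_image_frontier_pos ⟨w₀, hw₀⟩ huv)
    (le_csInf ⟨_, z₀, hz₀, rfl⟩ ?_)
  rintro _ ⟨z, hz, rfl⟩
  obtain ⟨w, hw, hwz⟩ := hcross z hz
  exact (csInf_le (bddBelow_image_norm_sub_add_norm_sub _ u v) ⟨w, hw, rfl⟩).trans hwz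

theorem sD_le_of_forall_mem_frontier {M : ℝ} (huv : u ≠ v) (hM : 0 ≤ M)
    (h : ∀ w ∈ frontier D, ‖u - v‖ / (‖u - w‖ + ‖w - v‖) ≤ M) : sD D u v ≤ M := by
  rcases (frontier D).eq_empty_or_nonempty with hD | hD
  · simpa [sD, hD] using hM
  have huv' : 0 < ‖u - v‖ := norm_pos_iff.mpr (sub_ne_zero.mpr huv)
  have hsum_pos : ∀ w, 0 < ‖u - w‖ + ‖w - v‖ :=
    fun w => huv'.trans_le (norm_sub_le_norm_sub_add_norm_sub u w v)
  obtain ⟨w₀, hw₀⟩ := hD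
  have hM_pos : 0 < M := (div_pos huv' (hsum_pos w₀)).trans_le (h w₀ hw₀)
  rw [sD, div_le_iff₀ (sInf_image_frontier_pos ⟨w₀, hw₀⟩ huv), mul_comm, ← div_le_iff₀ hM_pos]
  refine le_csInf ⟨_, w₀, hw₀, rfl⟩ ?_
  rintro _ ⟨w, hw, rfl⟩
  rw [div_le_iff₀ hM_pos, mul_comm, ← div_le_iff₀ (hsum_pos w)]
  exact h w hw

end TriangularRatio

theorem sD_convex_eq_sup_supporting_halfplanes_general (D : Set ℂ)
    (hD : IsOpen D) (hconv : Convex ℝ D)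
    (u v : ℂ) (hu : u ∈ D) (huv : u ≠ v) :
    sD D u v = sSup {x : ℝ | ∃ n p : ℂ, ‖n‖ = 1 ∧ p ∈ frontier D ∧
      D ⊆ {z : ℂ | ((starRingEnd ℂ) n * (z - p)).re < 0} ∧
      x = sD {z : ℂ | ((starRingEnd ℂ) n * (z - p)).re < 0} u v} := by
  simp only [Complex.re_conj_mul_eq_inner]
  set S := {x : ℝ | ∃ n p : ℂ, ‖n‖ = 1 ∧ p ∈ frontier D ∧
      D ⊆ {z : ℂ | ⟪n, z - p⟫ < 0} ∧ x = sD {z : ℂ | ⟪n, z - p⟫ < 0} u v}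
  have hn₀ {n : ℂ} (hn : ‖n‖ = 1) : n ≠ 0 := norm_ne_zero_iff.mp (hn ▸ one_ne_zero)
  have hS_le : ∀ x ∈ S, x ≤ sD D u v := by
    rintro _ ⟨n, p, hn, -, hDH, rfl⟩
    exact sD_le_sD_of_subset (isOpen_setOf_inner_sub_neg n p) hDH hu huv
      ⟨p, mem_frontier_setOf_inner_sub_neg (hn₀ hn) p⟩
  have hS_nonneg : 0 ≤ sSup S :=
    Real.sSup_nonneg (by rintro _ ⟨_, _, -, -, -, rfl⟩; exact sD_nonneg)
  have hfrontier_le : ∀ w ∈ frontier D, ‖u - v‖ / (‖u - w‖ + ‖w - v‖) ≤ sSup S := by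
    intro w hw
    obtain ⟨n, hn, hDH⟩ := exists_norm_eq_one_inner_sub_neg hD hconv ⟨u, hu⟩
      ((disjoint_frontier_iff_isOpen.mpr hD).notMem_of_mem_left hw)
    exact (norm_sub_div_le_sD (mem_frontier_setOf_inner_sub_neg (hn₀ hn) w) huv).trans
      (le_csSup ⟨_, hS_le⟩ ⟨n, w, hn, hw, hDH, rfl⟩)
  exact le_antisymm (sD_le_of_forall_mem_frontier huv hS_nonneg hfrontier_le)
    (Real.sSup_le hS_le sD_nonneg)

theorem sD_convex_eq_sup_supporting_halfplanes (D : Set ℂ)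
    (hD : IsOpen D) (hconv : Convex ℝ D) (hbd : (frontier D).Nonempty)
    (u v : ℂ) (hu : u ∈ D) (hv : v ∈ D) (huv : u ≠ v) :
    sD D u v = sSup {x : ℝ | ∃ n p : ℂ, ‖n‖ = 1 ∧ p ∈ frontier D ∧
      D ⊆ {z : ℂ | ((starRingEnd ℂ) n * (z - p)).re < 0} ∧
      x = sD {z : ℂ | ((starRingEnd ℂ) n * (z - p)).re < 0} u v} :=
  sD_convex_eq_sup_supporting_halfplanes_general D hD hconv u v hu huv
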